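/- Let P be a Horn constraint program and M a model of P. Then M is an M-maximal model of P, and Can(P,M) is the least M-maximal model of P (i.e., Can(P,M) is M-maximal and is contained in every M-maximal model of P). -/

import Mathlib

universe u

/-- A constraint `A = (X, C)`: domain `X` and a family `C` of subsets of `X`. -/
structure Constraint (α : Type u) where
  dom : Set α
  sat : Set (Set α)
  sat_sub : ∀ Y ∈ sat, Y ⊆ dom

/-- `M ⊨ A` iff `M ∩ Dom(A) ∈ C`. -/
def Constraint.Sat {α : Type u} (M : Set α) (A : Constraint α) : Prop :=
  M ∩ A.dom ∈ A.sat

/-- A constraint is monotone if its satisfying family is closed under supersets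
within the domain. -/
def Constraint.Mono {α : Type u} (A : Constraint α) : Prop :=
  ∀ W Y : Set α, W ∈ A.sat → W ⊆ Y → Y ⊆ A.dom → Y ∈ A.sat

/-- A rule `A ← A₁,…,A_k, not(A_{k+1}),…,not(A_m)`. -/
structure Rule (α : Type u) where
  head : Constraint α
  pos : Set (Constraint α)
  neg : Set (Constraint α)

/-- A constraint program is a set of rules. -/
abbrev Program (α : Type u) := Set (Rule α)

def Rule.Horn {α : Type u} (r : Rule α) : Prop := r.neg = ∅

def Rule.Mono {α : Type u} (r : Rule α) : Prop :=
  r.head.Mono ∧ (∀ A ∈ r.pos, A.Mono) ∧ (∀ A ∈ r.neg, A.Mono)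

def Program.Horn {α : Type u} (P : Program α) : Prop := ∀ r ∈ P, r.Horn

def Program.Mono {α : Type u} (P : Program α) : Prop := ∀ r ∈ P, r.Mono

/-- `M` satisfies the body of `r`. -/
def Rule.BodySat {α : Type u} (M : Set α) (r : Rule α) : Prop :=
  (∀ A ∈ r.pos, Constraint.Sat M A) ∧ (∀ A ∈ r.neg, ¬ Constraint.Sat M A)

/-- `P(M)`: the set of `M`-applicable rules of `P`. -/
def Program.app {α : Type u} (P : Program α) (M : Set α) : Program α :=
  {r ∈ P | r.BodySat M}

/-- `hset(r) = Dom(hd(r))`. -/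
def Rule.hset {α : Type u} (r : Rule α) : Set α := r.head.dom

/-- `hset(P)`: union of the headsets of rules of `P`. -/
def Program.hset {α : Type u} (P : Program α) : Set α := ⋃ r ∈ P, r.hset

def Rule.atoms {α : Type u} (r : Rule α) : Set α :=
  r.head.dom ∪ (⋃ A ∈ r.pos, A.dom) ∪ (⋃ A ∈ r.neg, A.dom)

/-- `At(P)`: atoms occurring in domains of constraints of `P`. -/
def Program.atoms {α : Type u} (P : Program α) : Set α := ⋃ r ∈ P, r.atoms

/-- `M` is a model of `P`. -/
def Program.IsModel {α : Type u} (P : Program α) (M : Set α) : Prop :=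
  ∀ r ∈ P, r.BodySat M → Constraint.Sat M r.head

/-- `M` is a supported model of `P`. -/
def Program.Supported {α : Type u} (P : Program α) (M : Set α) : Prop :=
  P.IsModel M ∧ M ⊆ (P.app M).hset

/-- The nondeterministic one-step provability operator `T_P^nd`. -/
def Program.Tnd {α : Type u} (P : Program α) (M : Set α) : Set (Set α) :=
  {M' | M' ⊆ (P.app M).hset ∧ ∀ r ∈ P.app M, Constraint.Sat M' r.head}

/-- A `P`-computation: a transfinite sequence starting at `∅`, increasing, with
each successor step nondeterministically one-step provable, continuous at limits. -/
structure PComputation {α : Type u} (P : Program α) where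
  X : Ordinal.{u} → Set α
  zero : X 0 = ∅
  incr : ∀ o, X o ⊆ X (o + 1)
  step : ∀ o, X (o + 1) ∈ P.Tnd (X o)
  limit : ∀ o : Ordinal.{u}, Order.IsSuccLimit o → X o = ⋃ β < o, X β

/-- The result `R_t` of a computation. -/
def PComputation.result {α : Type u} {P : Program α} (t : PComputation P) : Set α :=
  ⋃ o, t.X o

/-- `M` is a derivable model of `P`: the result of some `P`-computation. -/
def Program.Derivable {α : Type u} (P : Program α) (M : Set α) : Prop :=
  ∃ t : PComputation P, t.result = M

/-- The canonical sequence `t^{P,M}`: `X₀ = ∅`, `X_{β+1} = hset(P(X_β)) ∩ M`,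
unions at limits. -/
noncomputable def canSeq {α : Type u} (P : Program α) (M : Set α) (o : Ordinal.{u}) :
    Set α :=
  Ordinal.limitRecOn o ∅ (fun _ ih => (P.app ih).hset ∩ M)
    (fun o _ ih => ⋃ β : Ordinal.{u}, ⋃ h : β < o, ih β h)

/-- `Can(P,M)`: the result of the canonical computation. -/
noncomputable def Can {α : Type u} (P : Program α) (M : Set α) : Set α :=
  ⋃ o, canSeq P M o

/-- The reduct of a single rule: drop negated literals. -/
def Rule.pos_part {α : Type u} (r : Rule α) : Rule α := ⟨r.head, r.pos, ∅⟩

/-- The reduct `P^M`. -/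
def Program.reduct {α : Type u} (P : Program α) (M : Set α) : Program α :=
  {r' | ∃ r ∈ P, (∀ A ∈ r.neg, ¬ Constraint.Sat M A) ∧ r' = r.pos_part}

/-- `M` is a stable model of `P`: a derivable model of the reduct `P^M`. -/
def Program.Stable {α : Type u} (P : Program α) (M : Set α) : Prop :=
  (P.reduct M).Derivable M

/-- `N ⊨_M P`: `N` is an `M`-maximal model of the Horn program `P`. -/
def Program.MMax {α : Type u} (P : Program α) (M N : Set α) : Prop :=
  N ⊆ M ∧ P.IsModel N ∧ M ∩ (P.app N).hset ⊆ N

/-- `(X,Y)` is an SE-model of `P`. -/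
def Program.SE {α : Type u} (P : Program α) (X Y : Set α) : Prop :=
  X ⊆ Y ∧ P.IsModel Y ∧ (P.reduct Y).MMax Y X

/-- `(X,Y)` is a UE-model of `P`. -/
def Program.UE {α : Type u} (P : Program α) (X Y : Set α) : Prop :=
  P.SE X Y ∧ ∀ X', P.SE X' Y → X ⊆ X' → X = X' ∨ X' = Y

/-- Strong equivalence of monotone-constraint programs. -/
def StrongEq {α : Type u} (P Q : Program α) : Prop :=
  ∀ R : Program α, R.Mono → ∀ M : Set α, (P ∪ R).Stable M ↔ (Q ∪ R).Stable M

/-- The rule `(D,{D}) ←`. -/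
def factRule {α : Type u} (D : Set α) : Rule α :=
  ⟨⟨D, {D}, fun Y hY => by simp only [Set.mem_singleton_iff] at hY; simp [hY]⟩, ∅, ∅⟩

/-- Uniform equivalence of monotone-constraint programs. -/
def UnifEq {α : Type u} (P Q : Program α) : Prop :=
  ∀ D : Set α, ∀ M : Set α,
    (P ∪ {factRule D}).Stable M ↔ (Q ∪ {factRule D}).Stable M

/-- `P` is tight on `M`. -/
def Program.Tight {α : Type u} (P : Program α) (M : Set α) : Prop :=
  ∃ lam : α → Ordinal.{u}, ∀ r ∈ P.app M, ∀ x ∈ M ∩ r.hset,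
    ∀ a ∈ M ∩ (⋃ A ∈ r.pos, A.dom), lam a < lam x

/-! The map `X ↦ hset(P(X)) ∩ M` is monotone on `Set α` because the bodies of a monotone Horn
program persist upwards, and the canonical computation is exactly the transfinite
approximation `lfpApprox` of its least fixed point, so `Can(P,M)` is that least fixed point.
A set `N ⊆ M` is `M`-maximal iff it is a prefixed point of the map: being a model of `P` is
automatic, since on the headset of a rule applicable at `N` the sets `N` and `M` agree. -/

open OrdinalApprox

variable {α : Type u}

theorem Constraint.Sat.mono {A : Constraint α} (hA : A.Mono) {X Y : Set α} (hXY : X ⊆ Y)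
    (h : Constraint.Sat X A) : Constraint.Sat Y A :=
  hA _ _ h (Set.inter_subset_inter_left _ hXY) Set.inter_subset_right

theorem Rule.BodySat.mono {r : Rule α} (hr : r.Mono) (hH : r.Horn) {X Y : Set α}
    (hXY : X ⊆ Y) (h : r.BodySat X) : r.BodySat Y :=
  ⟨fun A hA => (h.1 A hA).mono (hr.2.1 A hA) hXY, fun A hA => by
    rw [Rule.Horn] at hH
    simp [hH] at hA⟩

namespace Program

variable {P : Program α}

theorem app_mono (hHorn : P.Horn) (hMono : P.Mono) {X Y : Set α} (hXY : X ⊆ Y) :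
    P.app X ⊆ P.app Y :=
  fun r ⟨hrP, hb⟩ => ⟨hrP, hb.mono (hMono r hrP) (hHorn r hrP) hXY⟩

theorem hset_mono {Q : Program α} (h : P ⊆ Q) : P.hset ⊆ Q.hset :=
  Set.biUnion_subset_biUnion_left h

theorem mem_hset {r : Rule α} (hr : r ∈ P) {x : α} (hx : x ∈ r.head.dom) : x ∈ P.hset :=
  Set.mem_biUnion hr hx

variable (P) in
def canOp (hHorn : P.Horn) (hMono : P.Mono) (M : Set α) : Set α →o Set α where
  toFun X := (P.app X).hset ∩ M
  monotone' _ _ hXY := Set.inter_subset_inter_left _ (hset_mono (app_mono hHorn hMono hXY))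

theorem IsModel.of_inter_hset_subset (hHorn : P.Horn) (hMono : P.Mono) {M N : Set α}
    (hMod : P.IsModel M) (hNM : N ⊆ M) (hclosed : M ∩ (P.app N).hset ⊆ N) :
    P.IsModel N := by
  intro r hrP hbody
  have hdom : N ∩ r.head.dom = M ∩ r.head.dom :=
    (Set.inter_subset_inter_left _ hNM).antisymm fun x hx =>
      ⟨hclosed ⟨hx.1, mem_hset (P := P.app N) ⟨hrP, hbody⟩ hx.2⟩, hx.2⟩
  rw [Constraint.Sat, hdom]
  exact hMod r hrP (hbody.mono (hMono r hrP) (hHorn r hrP) hNM)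

theorem mmax_iff (hHorn : P.Horn) (hMono : P.Mono) {M N : Set α} (hMod : P.IsModel M) :
    P.MMax M N ↔ N ⊆ M ∧ P.canOp hHorn hMono M N ≤ N := by
  rw [MMax, Set.inter_comm M]
  exact ⟨fun h => ⟨h.1, h.2.2⟩,
    fun h => ⟨h.1, IsModel.of_inter_hset_subset hHorn hMono hMod h.1 (Set.inter_comm M _ ▸ h.2),
      h.2⟩⟩

end Program

section Canonical

variable (P : Program α) (M : Set α)

theorem canSeq_zero : canSeq P M 0 = ∅ := by
  rw [canSeq, Ordinal.limitRecOn_zero]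

theorem canSeq_add_one (o : Ordinal.{u}) :
    canSeq P M (o + 1) = (P.app (canSeq P M o)).hset ∩ M := by
  rw [canSeq, Ordinal.limitRecOn_add_one]
  rfl

theorem canSeq_of_isSuccLimit {o : Ordinal.{u}} (h : Order.IsSuccLimit o) :
    canSeq P M o = ⋃ β < o, canSeq P M β := by
  rw [canSeq, Ordinal.limitRecOn_limit _ _ _ _ h]
  rfl

theorem canSeq_eq_lfpApprox (hHorn : P.Horn) (hMono : P.Mono) (o : Ordinal.{u}) :
    canSeq P M o = lfpApprox (P.canOp hHorn hMono M) ⊥ o := by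
  induction o using Ordinal.limitRecOn with
  | zero => rw [canSeq_zero, lfpApprox_zero]; rfl
  | add_one o ih =>
    rw [canSeq_add_one, lfpApprox_add_one _ bot_le, ← ih]
    rfl
  | limit o ho ih =>
    rw [canSeq_of_isSuccLimit P M ho, lfpApprox_of_isSuccLimit _ ho]
    exact (Set.iUnion_subtype (· < o) _).symm.trans (Set.iUnion_congr fun β => ih β β.2)

theorem can_eq_lfp (hHorn : P.Horn) (hMono : P.Mono) :
    Can P M = (P.canOp hHorn hMono M).lfp := by
  set F := P.canOp hHorn hMono M
  have hstable := iSup_lfpApprox_eq_of_mem_fixedPoints F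
    (lfpApprox_ord_mem_fixedPoint F (x := ⊥) bot_le)
  rw [lfpApprox_ord_eq_lfp] at hstable
  rw [← hstable, Can]
  exact Set.iUnion_congr (canSeq_eq_lfpApprox P M hHorn hMono)

end Canonical

/-- `M` is an `M`-maximal model of `P` and `Can(P,M)` is the least
`M`-maximal model of `P`. -/
theorem mmax_and_can_least {α : Type u} (P : Program α) (hHorn : P.Horn)
    (hMono : P.Mono) (M : Set α) (hMod : P.IsModel M) :
    P.MMax M M ∧ P.MMax M (Can P M) ∧ ∀ N : Set α, P.MMax M N → Can P M ⊆ N := by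
  set F := P.canOp hHorn hMono M
  have hfix : F F.lfp = F.lfp := F.map_lfp
  simp only [Program.mmax_iff hHorn hMono hMod, can_eq_lfp P M hHorn hMono]
  refine ⟨⟨subset_rfl, Set.inter_subset_right⟩, ⟨?_, hfix.le⟩, fun N hN => F.lfp_le hN.2⟩
  rw [← hfix]
  exact Set.inter_subset_right
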